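/- arXiv:2404.06999 — 4 statements merged into one kernel-verified Lean document; each statement's English description precedes it below -/
import Mathlib

section
/- For integers k₀, k, j with j ≠ ±k₀ and j ≠ ±k, one has 1/(|k₀² - j²| · |k² - j²|) ≤ 12/⟨k₀⟩², where ⟨k⟩ = |k| + 1. -/
/-- ⟨k⟩ = |k| + 1 -/
noncomputable def br (k : ℤ) : ℝ := |(k : ℝ)| + 1

lemma aux_lb (x y : ℤ) (hx : x ≠ y) (hy : x ≠ -y) : 2 * |y| - 1 ≤ |x ^ 2 - y ^ 2| := by
  have hfac : x ^ 2 - y ^ 2 = (x - y) * (x + y) := by ring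
  have hc : 1 ≤ |x - y| := Int.one_le_abs (sub_ne_zero.mpr hx)
  have hd : 1 ≤ |x + y| := Int.one_le_abs (by intro h; exact hy (by linarith [eq_neg_of_add_eq_zero_left h]))
  have hsum : 2 * |y| ≤ |x - y| + |x + y| := by
    calc 2 * |y| = |2 * y| := by rw [abs_mul]; norm_num
    _ = |(x + y) - (x - y)| := by congr 1; ring
    _ ≤ |x + y| + |x - y| := abs_sub _ _
    _ = |x - y| + |x + y| := by ring
  rw [hfac, abs_mul]
  nlinarith [hc, hd, hsum]

lemma key_int (k₀ k j : ℤ) (h1 : j ≠ k₀) (h2 : j ≠ -k₀) (h3 : j ≠ k) (h4 : j ≠ -k) :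
    (|k₀| + 1) ^ 2 ≤ 12 * |k₀ ^ 2 - j ^ 2| * |k ^ 2 - j ^ 2| := by
  have hA1 : 1 ≤ |k₀ ^ 2 - j ^ 2| := by
    apply Int.one_le_abs
    intro h
    have : (k₀ - j) * (k₀ + j) = 0 := by linarith [h]
    rcases mul_eq_zero.mp this with h' | h'
    · exact h1 (by linarith)
    · exact h2 (by linarith)
  have hB1 : 1 ≤ |k ^ 2 - j ^ 2| := by
    apply Int.one_le_abs
    intro h
    have : (k - j) * (k + j) = 0 := by linarith [h]
    rcases mul_eq_zero.mp this with h' | h'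
    · exact h3 (by linarith)
    · exact h4 (by linarith)
  have hA2 : 2 * |j| - 1 ≤ |k₀ ^ 2 - j ^ 2| := aux_lb k₀ j (fun h => h1 h.symm) (fun h => h2 (by omega))
  have hB2 : 2 * |j| - 1 ≤ |k ^ 2 - j ^ 2| := aux_lb k j (fun h => h3 h.symm) (fun h => h4 (by omega))
  set n := |k₀| with hn
  set m := |j| with hm
  have hn0 : 0 ≤ n := abs_nonneg _
  have hm0 : 0 ≤ m := abs_nonneg _
  rcases lt_or_ge m n with hcase | hcase
  · -- |j| < |k₀| : |k₀² - j²| = n² - m²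
    have hAeq : |k₀ ^ 2 - j ^ 2| = n ^ 2 - m ^ 2 := by
      rw [abs_of_pos]
      · rw [hn, hm, sq_abs, sq_abs]
      · rw [← sq_abs k₀, ← sq_abs j]
        nlinarith [hcase, hm0]
    rw [hAeq]
    rcases eq_or_lt_of_le hm0 with hm1 | hm1
    · -- m = 0, n ≥ 1
      nlinarith [hB1, hcase]
    · -- 1 ≤ m ≤ n - 1
      nlinarith [hB2, hcase, hm1, mul_pos (by nlinarith : (0:ℤ) < n ^ 2 - m ^ 2) (by linarith : (0:ℤ) < 2 * m - 1)]
  · -- n ≤ m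
    rcases eq_or_lt_of_le hn0 with hn1 | hn1
    · nlinarith [hA1, hB1]
    · have h1' : 2 * n - 1 ≤ |k₀ ^ 2 - j ^ 2| := by linarith
      have h2' : 2 * n - 1 ≤ |k ^ 2 - j ^ 2| := by linarith
      nlinarith [h1', h2', hn1, mul_le_mul h1' h2' (by linarith) (le_trans (by linarith) h1')]

theorem ineq2 (k₀ k j : ℤ) (h1 : j ≠ k₀) (h2 : j ≠ -k₀) (h3 : j ≠ k) (h4 : j ≠ -k) :
    1 / (|((k₀ ^ 2 - j ^ 2 : ℤ) : ℝ)| * |((k ^ 2 - j ^ 2 : ℤ) : ℝ)|) ≤ 12 / (br k₀) ^ 2 := by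
  have hA : (0:ℝ) < |((k₀ ^ 2 - j ^ 2 : ℤ) : ℝ)| := by
    rw [abs_pos]
    intro h
    have : k₀ ^ 2 - j ^ 2 = 0 := by exact_mod_cast h
    have : (k₀ - j) * (k₀ + j) = 0 := by linarith
    rcases mul_eq_zero.mp this with h' | h'
    · exact h1 (by linarith)
    · exact h2 (by linarith)
  have hB : (0:ℝ) < |((k ^ 2 - j ^ 2 : ℤ) : ℝ)| := by
    rw [abs_pos]
    intro h
    have : k ^ 2 - j ^ 2 = 0 := by exact_mod_cast h
    have : (k - j) * (k + j) = 0 := by linarith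
    rcases mul_eq_zero.mp this with h' | h'
    · exact h3 (by linarith)
    · exact h4 (by linarith)
  have hbr : (0:ℝ) < br k₀ := by
    unfold br; positivity
  rw [div_le_div_iff₀ (by positivity) (by positivity)]
  have hcast : (br k₀) ^ 2 = (((|k₀| + 1 : ℤ) : ℝ)) ^ 2 := by
    unfold br; push_cast [Int.cast_abs]; ring
  rw [hcast]
  have := key_int k₀ k j h1 h2 h3 h4
  have h12 : ((( |k₀| + 1 : ℤ) : ℝ)) ^ 2 ≤ 12 * (|((k₀ ^ 2 - j ^ 2 : ℤ) : ℝ)| * |((k ^ 2 - j ^ 2 : ℤ) : ℝ)|) := by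
    push_cast [← Int.cast_abs]
    exact_mod_cast (by linarith [this] : ((|k₀| + 1) ^ 2 : ℤ) ≤ 12 * (|k₀ ^ 2 - j ^ 2| * |k ^ 2 - j ^ 2|))
  linarith [h12]
end

section
/- Let ν > 1 and β ≥ 0. Then there exists a constant c_ν depending only on ν such that for all integers s, m: ∑_{k∈ℤ} e^{-β|s-k| - β|k-m|} / (⟨s-k⟩^ν ⟨k-m⟩^ν) ≤ c_ν e^{-β|s-m|} / ⟨s-m⟩^ν, where ⟨k⟩ = |k| + 1. -/
open Real

/-! Both the exponential weight and ⟨·⟩ are subadditive along s - m = (s - k) + (k - m).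
For the exponential this already gives the factor e^{-β|s-m|}. For the polynomial weight,
the larger of ⟨s-k⟩, ⟨k-m⟩ is at least ⟨s-m⟩/2, so
  1/(⟨s-k⟩^ν ⟨k-m⟩^ν) ≤ 2^ν ⟨s-m⟩^{-ν} (⟨s-k⟩^{-ν} + ⟨k-m⟩^{-ν}),
and each of the two remaining sums over k equals ∑_k ⟨k⟩^{-ν} < ∞ because ν > 1. -/

lemma br_pos (k : ℤ) : 0 < br k := by
  unfold br; positivity

lemma br_sub_le (s k m : ℤ) : br (s - m) ≤ br (s - k) + br (k - m) := by
  unfold br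
  push_cast
  linarith [abs_sub_le (s : ℝ) k m]

lemma summable_one_div_br_rpow {ν : ℝ} (hν : 1 < ν) :
    Summable fun k : ℤ => 1 / br k ^ ν := by
  apply Summable.of_nat_of_neg_add_one
  · refine ((summable_one_div_nat_add_rpow 1 ν).2 hν).congr fun n => ?_
    simp [br, abs_of_nonneg (by positivity : (0 : ℝ) ≤ n + 1)]
  · refine ((summable_one_div_nat_add_rpow 2 ν).2 hν).congr fun n => ?_
    have : |(n : ℝ) + 2| = |((-(n + 1) : ℤ) : ℝ)| + 1 := by
      push_cast
      rw [abs_of_nonneg (by positivity), abs_of_nonpos (by linarith)]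
      ring
    rw [this, br]

lemma rpow_le_two_rpow_mul_add_rpow {x y z ν : ℝ} (hx : 0 ≤ x) (hy : 0 ≤ y) (hz : 0 ≤ z)
    (hzxy : z ≤ x + y) (hν : 0 ≤ ν) : z ^ ν ≤ 2 ^ ν * (x ^ ν + y ^ ν) := by
  calc z ^ ν ≤ (2 * max x y) ^ ν :=
        rpow_le_rpow hz (by linarith [le_max_left x y, le_max_right x y]) hν
    _ = 2 ^ ν * max x y ^ ν := mul_rpow zero_le_two (le_max_of_le_left hx)
    _ ≤ 2 ^ ν * (x ^ ν + y ^ ν) := by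
        gcongr
        rcases max_cases x y with ⟨h, -⟩ | ⟨h, -⟩ <;> rw [h]
        · linarith [rpow_nonneg hy ν]
        · linarith [rpow_nonneg hx ν]

lemma conv_term_le {ν β : ℝ} (hν : 0 ≤ ν) (hβ : 0 ≤ β) (s k m : ℤ) :
    exp (-β * |((s - k : ℤ) : ℝ)| - β * |((k - m : ℤ) : ℝ)|) /
        (br (s - k) ^ ν * br (k - m) ^ ν)
      ≤ 2 ^ ν * exp (-β * |((s - m : ℤ) : ℝ)|) / br (s - m) ^ ν
          * (1 / br (s - k) ^ ν + 1 / br (k - m) ^ ν) := by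
  have hexp : exp (-β * |((s - k : ℤ) : ℝ)| - β * |((k - m : ℤ) : ℝ)|)
      ≤ exp (-β * |((s - m : ℤ) : ℝ)|) := by
    have : |((s - m : ℤ) : ℝ)| ≤ |((s - k : ℤ) : ℝ)| + |((k - m : ℤ) : ℝ)| := by
      push_cast; exact abs_sub_le _ _ _
    exact exp_le_exp.2 (by nlinarith)
  have hpow := rpow_le_two_rpow_mul_add_rpow (br_pos (s - k)).le (br_pos (k - m)).le
    (br_pos (s - m)).le (br_sub_le s k m) hν
  have hX := rpow_pos_of_pos (br_pos (s - k)) ν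
  have hY := rpow_pos_of_pos (br_pos (k - m)) ν
  have hZ := rpow_pos_of_pos (br_pos (s - m)) ν
  rw [div_add_div _ _ hX.ne' hY.ne', div_mul_div_comm,
    div_le_div_iff₀ (by positivity) (by positivity)]
  calc _ ≤ exp (-β * |((s - m : ℤ) : ℝ)|)
          * (br (s - m) ^ ν * (br (s - k) ^ ν * br (k - m) ^ ν)) := by
        gcongr
    _ ≤ exp (-β * |((s - m : ℤ) : ℝ)|) * ((2 ^ ν * (br (k - m) ^ ν + br (s - k) ^ ν))
          * (br (s - k) ^ ν * br (k - m) ^ ν)) := by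
        gcongr; linarith
    _ = _ := by ring

theorem conv_lemma (ν : ℝ) (hν : 1 < ν) :
    ∃ c : ℝ, 0 < c ∧ ∀ β : ℝ, 0 ≤ β → ∀ s m : ℤ,
      ∑' k : ℤ, Real.exp (-β * |((s - k : ℤ) : ℝ)| - β * |((k - m : ℤ) : ℝ)|) /
          (br (s - k) ^ ν * br (k - m) ^ ν)
        ≤ c * Real.exp (-β * |((s - m : ℤ) : ℝ)|) / br (s - m) ^ ν := by
  have hsum := summable_one_div_br_rpow hν
  set C := ∑' k : ℤ, 1 / br k ^ ν
  have hC : 0 < C := hsum.tsum_pos (fun k => by have := br_pos k; positivity) 0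
    (by have := br_pos 0; positivity)
  refine ⟨2 ^ ν * (2 * C), by positivity, fun β hβ s m => ?_⟩
  have hsk : HasSum (fun k => 1 / br (s - k) ^ ν) C :=
    (Equiv.subLeft s).hasSum_iff (f := fun k => 1 / br k ^ ν) |>.2 hsum.hasSum
  have hkm : HasSum (fun k => 1 / br (k - m) ^ ν) C :=
    (Equiv.subRight m).hasSum_iff (f := fun k => 1 / br k ^ ν) |>.2 hsum.hasSum
  have hbound k := conv_term_le (by linarith : 0 ≤ ν) hβ s k m
  have hmajorant :=
    (hsk.add hkm).mul_left (2 ^ ν * exp (-β * |((s - m : ℤ) : ℝ)|) / br (s - m) ^ ν)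
  have hterms : Summable fun k : ℤ =>
      exp (-β * |((s - k : ℤ) : ℝ)| - β * |((k - m : ℤ) : ℝ)|) /
        (br (s - k) ^ ν * br (k - m) ^ ν) :=
    hmajorant.summable.of_nonneg_of_le
      (fun k => by have := br_pos (s - k); have := br_pos (k - m); positivity) hbound
  calc _ ≤ 2 ^ ν * exp (-β * |((s - m : ℤ) : ℝ)|) / br (s - m) ^ ν * (C + C) :=
        hasSum_le hbound hterms.hasSum hmajorant
    _ = _ := by ring
end

section
/- Let s ∈ ℕ and let ℰ be an s×s complex matrix with |ℰ_{jk}| ≤ σ_{jk}, where the nonnegative numbers σ_{jk} satisfy ∑_{l=1}^s σ_{jl} σ_{lk} ≤ (1/2) σ_{jk} for all j, k. Then I + ℰ is invertible and |(I+ℰ)^{-1}_{jk} - δ_{jk}| ≤ 2σ_{jk} for all j, k. -/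
/-!
If `‖A j k‖ ≤ σ j k` and `σ * σ ≤ c • σ` entrywise, induction gives `‖(A ^ (n + 1)) j k‖ ≤ c ^ n * σ j k`.
For `c < 1` the Neumann series `∑ (-ℰ) ^ n` therefore converges entrywise, it inverts `1 + ℰ`, and
its part off the identity is bounded entrywise by `∑ c ^ n * σ j k = (1 - c)⁻¹ * σ j k`.
-/

open Matrix

namespace Matrix

variable {ι R : Type*} [Fintype ι] [DecidableEq ι]

theorem norm_pow_succ_apply_le [SeminormedRing R] {A : Matrix ι ι R} {σ : Matrix ι ι ℝ} {c : ℝ}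
    (hc : 0 ≤ c) (hA : ∀ j k, ‖A j k‖ ≤ σ j k)
    (hσ : ∀ j k, ∑ l, σ j l * σ l k ≤ c * σ j k) (n : ℕ) (j k : ι) :
    ‖(A ^ (n + 1)) j k‖ ≤ c ^ n * σ j k := by
  induction n generalizing j k with
  | zero => simpa using hA j k
  | succ n ih =>
    rw [pow_succ, mul_apply]
    calc ‖∑ l, (A ^ (n + 1)) j l * A l k‖
        ≤ ∑ l, ‖(A ^ (n + 1)) j l‖ * ‖A l k‖ :=
          (norm_sum_le _ _).trans (Finset.sum_le_sum fun l _ => norm_mul_le _ _)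
      _ ≤ ∑ l, c ^ n * σ j l * σ l k := by
          refine Finset.sum_le_sum fun l _ => mul_le_mul (ih j l) (hA l k) (norm_nonneg _) ?_
          exact mul_nonneg (pow_nonneg hc n) ((norm_nonneg _).trans (hA j l))
      _ = c ^ n * ∑ l, σ j l * σ l k := by simp_rw [Finset.mul_sum, mul_assoc]
      _ ≤ c ^ n * (c * σ j k) := by gcongr; exact hσ j k
      _ = c ^ (n + 1) * σ j k := by ring

variable [NormedRing R] [CompleteSpace R] {A : Matrix ι ι R} {σ : Matrix ι ι ℝ} {c : ℝ}

theorem summable_pow_of_norm_apply_le (hc0 : 0 ≤ c) (hc1 : c < 1) (hA : ∀ j k, ‖A j k‖ ≤ σ j k)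
    (hσ : ∀ j k, ∑ l, σ j l * σ l k ≤ c * σ j k) :
    Summable fun n : ℕ => A ^ n := by
  refine (summable_nat_add_iff 1).mp (Pi.summable.mpr fun j => Pi.summable.mpr fun k => ?_)
  exact .of_norm_bounded ((hasSum_geometric_of_lt_one hc0 hc1).mul_right (σ j k)).summable
    (norm_pow_succ_apply_le hc0 hA hσ · j k)

theorem norm_tsum_pow_sub_one_apply_le (hc0 : 0 ≤ c) (hc1 : c < 1)
    (hA : ∀ j k, ‖A j k‖ ≤ σ j k) (hσ : ∀ j k, ∑ l, σ j l * σ l k ≤ c * σ j k) (j k : ι) :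
    ‖(∑' n : ℕ, A ^ n) j k - (1 : Matrix ι ι R) j k‖ ≤ (1 - c)⁻¹ * σ j k := by
  have hsum := summable_pow_of_norm_apply_le hc0 hc1 hA hσ
  have htail : (∑' n : ℕ, A ^ (n + 1)) j k = ∑' n : ℕ, (A ^ (n + 1)) j k :=
    (Pi.hasSum.mp (Pi.hasSum.mp ((summable_nat_add_iff 1).mpr hsum).hasSum j) k).tsum_eq.symm
  rw [hsum.tsum_eq_zero_add, pow_zero, add_apply, add_sub_cancel_left, htail]
  exact tsum_of_norm_bounded ((hasSum_geometric_of_lt_one hc0 hc1).mul_right (σ j k))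
    (norm_pow_succ_apply_le hc0 hA hσ · j k)

end Matrix

theorem inv_one_add_E_bound_general (s : ℕ) (ℰ : Matrix (Fin s) (Fin s) ℂ)
    (σ : Matrix (Fin s) (Fin s) ℝ)
    (hE : ∀ j k, ‖ℰ j k‖ ≤ σ j k)
    (hcontr : ∀ j k, ∑ l : Fin s, σ j l * σ l k ≤ (1 / 2) * σ j k) :
    IsUnit (1 + ℰ) ∧
      ∀ j k, ‖(1 + ℰ)⁻¹ j k - (1 : Matrix (Fin s) (Fin s) ℂ) j k‖ ≤ 2 * σ j k := by
  have hnegE : ∀ j k, ‖(-ℰ) j k‖ ≤ σ j k := by simpa using hE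
  have hneumann : (1 + ℰ) * ∑' n : ℕ, (-ℰ) ^ n = 1 := by
    simpa using (summable_pow_of_norm_apply_le (by norm_num) (by norm_num) hnegE
      hcontr).one_sub_mul_tsum_pow
  refine ⟨.of_mul_eq_one _ hneumann, fun j k => ?_⟩
  rw [inv_eq_right_inv hneumann]
  convert norm_tsum_pow_sub_one_apply_le (by norm_num) (by norm_num) hnegE hcontr j k using 2
  norm_num

theorem inv_one_add_E_bound (s : ℕ) (ℰ : Matrix (Fin s) (Fin s) ℂ)
    (σ : Matrix (Fin s) (Fin s) ℝ)
    (hσpos : ∀ j k, 0 ≤ σ j k)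
    (hE : ∀ j k, ‖ℰ j k‖ ≤ σ j k)
    (hcontr : ∀ j k, ∑ l : Fin s, σ j l * σ l k ≤ (1 / 2) * σ j k) :
    IsUnit (1 + ℰ) ∧
      ∀ j k, ‖(1 + ℰ)⁻¹ j k - (1 : Matrix (Fin s) (Fin s) ℂ) j k‖ ≤ 2 * σ j k :=
  inv_one_add_E_bound_general s ℰ σ hE hcontr
end

section
/- Let h > 0, c_v > 0, α > 1, β ≥ 0, t₀ > 0, and suppose v_k : ℝ → ℂ satisfy sup_t |v_k(t)| ≤ c_v e^{-β|k|}/⟨k⟩^α for all k ∈ ℤ, with v_0 ≡ 0. Fix k₀ ∈ ℤ and define A₁(t) = ∫₀ᵗ ∑_{j≠±k₀} v_{k₀-j}(τ) v_{j-k₀}(τ)/(k₀² - j²) dτ. Then for |t| ≤ t₀, |A₁(t)| ≤ |t| c_v² c₀ / ⟨k₀⟩² for an absolute constant c₀. -/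
/-!
Bounding each term by `cv² / (⟨j - k₀⟩² |k₀² - j²|)` only gives decay `⟨k₀⟩⁻¹`, because of the
terms with `j` near `k₀`. Pairing `j = k₀ + l` with `j = k₀ - l`, which carry the same coefficient
`v_{-l} v_l`, combines the two denominators into `2 / (4k₀² - l²)`. For `|l| ≤ |k₀|` this is
`O(⟨k₀⟩⁻²)`; for `|l| > |k₀|` we have `⟨l⟩ ≥ ⟨k₀⟩`, and
`2 / |(l - 2k₀)(l + 2k₀)| ≤ (l - 2k₀)⁻² + (l + 2k₀)⁻²` is summable in `l` uniformly in `k₀`.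
-/

open Real

lemma one_le_br (k : ℤ) : 1 ≤ br k :=
  le_add_of_nonneg_left (abs_nonneg _)

lemma abs_le_br (k : ℤ) : |(k : ℝ)| ≤ br k :=
  le_add_of_nonneg_right zero_le_one

lemma br_neg (k : ℤ) : br (-k) = br k := by
  simp [br]

lemma br_le_br {k l : ℤ} (h : |(k : ℝ)| ≤ |(l : ℝ)|) : br k ≤ br l := by
  unfold br; linarith

lemma br_le_two_mul_abs {k : ℤ} (hk : k ≠ 0) : br k ≤ 2 * |(k : ℝ)| := by
  have : (1 : ℝ) ≤ |(k : ℝ)| := by exact_mod_cast Int.one_le_abs hk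
  rw [br]; linarith

lemma inv_sq_le_four_mul_inv_br_sq {k : ℤ} (hk : k ≠ 0) :
    ((k : ℝ) ^ 2)⁻¹ ≤ 4 * (br k ^ 2)⁻¹ := by
  have h := br_le_two_mul_abs hk
  rw [← div_eq_mul_inv, le_div_iff₀ (pow_pos (br_pos k) 2), inv_mul_le_iff₀ (by positivity)]
  nlinarith [sq_abs (k : ℝ), br_pos k]

lemma summable_inv_br_sq : Summable fun k : ℤ => (br k ^ 2)⁻¹ := by
  refine Summable.of_norm_bounded_eventually (summable_one_div_int_pow.mpr one_lt_two) ?_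
  filter_upwards [Filter.eventually_cofinite_ne 0] with k hk
  rw [norm_inv, norm_pow, Real.norm_of_nonneg (br_pos k).le, one_div, ← sq_abs (k : ℝ)]
  exact inv_anti₀ (by positivity) (pow_le_pow_left₀ (abs_nonneg _) (abs_le_br k) 2)

lemma mul_exp_div_br_rpow_le {c α β : ℝ} (hc : 0 ≤ c) (hα : 1 ≤ α) (hβ : 0 ≤ β) (k : ℤ) :
    c * exp (-β * |(k : ℝ)|) / br k ^ α ≤ c / br k := by
  have hexp : exp (-β * |(k : ℝ)|) ≤ 1 :=
    exp_le_one_iff.mpr (by nlinarith [abs_nonneg (k : ℝ)])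
  have hpow : br k ≤ br k ^ α := by
    simpa using rpow_le_rpow_of_exponent_le (one_le_br k) hα
  exact div_le_div₀ hc (mul_le_of_le_one_right hc hexp) (br_pos k) hpow

lemma norm_div_intCast_le (z : ℂ) (n : ℤ) : ‖z / n‖ ≤ ‖z‖ := by
  rcases eq_or_ne n 0 with rfl | hn
  · simp
  · rw [norm_div, Complex.norm_intCast]
    exact div_le_self (norm_nonneg z) (by exact_mod_cast Int.one_le_abs hn)

lemma two_mul_norm_tsum_le {E : Type*} [NormedAddCommGroup E] [NormedSpace ℝ E] {G : ℤ → E}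
    (hG : Summable G) {b : ℤ → ℝ} (hb : Summable b) (h : ∀ l, ‖G l + G (-l)‖ ≤ b l) :
    2 * ‖∑' l, G l‖ ≤ ∑' l, b l := by
  have hneg : Summable fun l => G (-l) := (Equiv.neg ℤ).summable_iff.mpr hG
  have hpair : ∑' l, (G l + G (-l)) = (2 : ℝ) • ∑' l, G l := by
    rw [hG.tsum_add hneg, tsum_comp_neg, two_smul]
  calc 2 * ‖∑' l, G l‖ = ‖∑' l, (G l + G (-l))‖ := by
        rw [hpair, norm_smul, Real.norm_two]
    _ ≤ ∑' l, b l := tsum_of_norm_bounded hb.hasSum h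

lemma two_div_abs_mul_le (x y : ℝ) :
    2 / |x * y| ≤ (x ^ 2)⁻¹ + (y ^ 2)⁻¹ := by
  have h := two_mul_le_add_sq |x|⁻¹ |y|⁻¹
  rw [inv_pow, inv_pow, sq_abs, sq_abs] at h
  rwa [abs_mul, div_eq_mul_inv, mul_inv, ← mul_assoc]

/-- The coefficient of `a (-l) * a l` in the terms `j = k + l` and `j = k - l` of the sum; as there,
`0⁻¹ = 0` discards the terms `j = ±k`. -/
noncomputable def pairKernel (k l : ℤ) : ℝ :=
  ((k : ℝ) ^ 2 - (k + l) ^ 2)⁻¹ + ((k : ℝ) ^ 2 - (k - l) ^ 2)⁻¹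

lemma pairKernel_neg (k l : ℤ) : pairKernel k (-l) = pairKernel k l := by
  simp only [pairKernel, Int.cast_neg, sub_neg_eq_add, ← sub_eq_add_neg]
  ring

lemma pairKernel_eq {k l : ℤ} (hl : l ≠ 0) (h₁ : l - 2 * k ≠ 0) (h₂ : l + 2 * k ≠ 0) :
    pairKernel k l = 2 / (4 * (k : ℝ) ^ 2 - l ^ 2) := by
  have hl' : (l : ℝ) ≠ 0 := by exact_mod_cast hl
  have h₁' : (l : ℝ) - 2 * k ≠ 0 := by exact_mod_cast h₁
  have h₂' : (l : ℝ) + 2 * k ≠ 0 := by exact_mod_cast h₂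
  rw [pairKernel, show (k : ℝ) ^ 2 - (k + l) ^ 2 = -(l * (l + 2 * k)) by ring,
    show (k : ℝ) ^ 2 - (k - l) ^ 2 = -(l * (l - 2 * k)) by ring,
    show 4 * (k : ℝ) ^ 2 - l ^ 2 = -((l - 2 * k) * (l + 2 * k)) by ring]
  field_simp
  ring

lemma abs_pairKernel_two_mul_le {k : ℤ} (hk : k ≠ 0) : |pairKernel k (2 * k)| ≤ 1 := by
  have hk' : (1 : ℝ) ≤ (k : ℝ) ^ 2 := by
    rw [← sq_abs]; exact one_le_pow₀ (by exact_mod_cast Int.one_le_abs hk)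
  rw [pairKernel, show (k : ℝ) ^ 2 - (k + ↑(2 * k)) ^ 2 = -(8 * k ^ 2) by push_cast; ring,
    show (k : ℝ) ^ 2 - (k - ↑(2 * k)) ^ 2 = 0 by push_cast; ring, inv_zero, add_zero, abs_inv,
    abs_neg, abs_of_pos (by positivity)]
  exact inv_le_one_of_one_le₀ (by linarith)

lemma abs_pairKernel_le_of_sq_le {k l : ℤ} (h : (l : ℝ) ^ 2 ≤ (k : ℝ) ^ 2) :
    |pairKernel k l| ≤ 4 / br k ^ 2 := by
  rcases eq_or_ne l 0 with rfl | hl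
  · simp [pairKernel]; positivity
  have hl' : (l : ℝ) ≠ 0 := by exact_mod_cast hl
  have hk : k ≠ 0 := by rintro rfl; simp at h; exact hl h
  have hk' : (k : ℝ) ≠ 0 := by exact_mod_cast hk
  have h₁ : l - 2 * k ≠ 0 := fun e => hk' (by
    have : (l : ℝ) = 2 * k := by exact_mod_cast sub_eq_zero.mp e
    nlinarith [sq_pos_of_ne_zero hk'])
  have h₂ : l + 2 * k ≠ 0 := fun e => hk' (by
    have : (l : ℝ) = -(2 * k) := by exact_mod_cast eq_neg_of_add_eq_zero_left e
    nlinarith [sq_pos_of_ne_zero hk'])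
  have hbr : br k ^ 2 ≤ 4 * (k : ℝ) ^ 2 := by
    have := br_le_two_mul_abs hk
    nlinarith [sq_abs (k : ℝ), br_pos k]
  have hpos : 0 < 4 * (k : ℝ) ^ 2 - l ^ 2 := by nlinarith [sq_pos_of_ne_zero hk']
  rw [pairKernel_eq hl h₁ h₂, abs_of_pos (div_pos two_pos hpos),
    div_le_div_iff₀ hpos (pow_pos (br_pos k) 2)]
  nlinarith

lemma abs_pairKernel_le_of_sq_lt {k l : ℤ} (h : (k : ℝ) ^ 2 < (l : ℝ) ^ 2) :
    |pairKernel k l| ≤ 4 * ((br (l - 2 * k) ^ 2)⁻¹ + (br (l + 2 * k) ^ 2)⁻¹) := by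
  have hw : ∀ m : ℤ, 0 ≤ (br m ^ 2)⁻¹ := fun m => by have := br_pos m; positivity
  have hw₀ : (br 0 ^ 2)⁻¹ = 1 := by simp [br]
  rcases eq_or_ne (l - 2 * k) 0 with h₁ | h₁
  · obtain rfl : l = 2 * k := by omega
    have hk : k ≠ 0 := by rintro rfl; simp at h
    rw [h₁, hw₀]
    linarith [abs_pairKernel_two_mul_le hk, hw (2 * k + 2 * k)]
  rcases eq_or_ne (l + 2 * k) 0 with h₂ | h₂
  · obtain rfl : l = -(2 * k) := by omega
    have hk : k ≠ 0 := by rintro rfl; simp at h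
    rw [h₂, hw₀, pairKernel_neg]
    linarith [abs_pairKernel_two_mul_le hk, hw (-(2 * k) - 2 * k)]
  have hl : l ≠ 0 := by rintro rfl; simp at h; nlinarith [sq_nonneg (k : ℝ)]
  rw [pairKernel_eq hl h₁ h₂, show 4 * (k : ℝ) ^ 2 - l ^ 2 = -((l - 2 * k : ℤ) * (l + 2 * k : ℤ)) by
    push_cast; ring, div_neg, abs_neg, abs_div, abs_two]
  calc _ ≤ (((l - 2 * k : ℤ) : ℝ) ^ 2)⁻¹ + (((l + 2 * k : ℤ) : ℝ) ^ 2)⁻¹ := two_div_abs_mul_le _ _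
    _ ≤ _ := by
      linarith [inv_sq_le_four_mul_inv_br_sq h₁, inv_sq_le_four_mul_inv_br_sq h₂]

lemma abs_pairKernel_div_br_sq_le (k l : ℤ) :
    |pairKernel k l| / br l ^ 2 ≤
      4 / br k ^ 2 * ((br l ^ 2)⁻¹ + (br (l - 2 * k) ^ 2)⁻¹ + (br (l + 2 * k) ^ 2)⁻¹) := by
  have hw : ∀ m : ℤ, 0 < (br m ^ 2)⁻¹ := fun m => by have := br_pos m; positivity
  have hk := br_pos k
  rcases le_or_gt ((l : ℝ) ^ 2) ((k : ℝ) ^ 2) with h | h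
  · calc |pairKernel k l| / br l ^ 2 ≤ 4 / br k ^ 2 * (br l ^ 2)⁻¹ := by
          rw [div_eq_mul_inv]; gcongr; exact abs_pairKernel_le_of_sq_le h
      _ ≤ _ := by gcongr; linarith [hw (l - 2 * k), hw (l + 2 * k)]
  · have hbr : br k ≤ br l := br_le_br (sq_lt_sq.mp h).le
    calc |pairKernel k l| / br l ^ 2
        ≤ 4 * ((br (l - 2 * k) ^ 2)⁻¹ + (br (l + 2 * k) ^ 2)⁻¹) / br k ^ 2 := by
          gcongr; exact abs_pairKernel_le_of_sq_lt h
      _ ≤ _ := by rw [div_mul_eq_mul_div]; gcongr; linarith [hw l]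

lemma norm_neg_mul_le {C : ℝ} {a : ℤ → ℂ} (ha : ∀ m, ‖a m‖ ≤ C / br m) (l : ℤ) :
    ‖a (-l) * a l‖ ≤ C ^ 2 * (br l ^ 2)⁻¹ := by
  have hC : 0 ≤ C := by simpa [br] using (norm_nonneg _).trans (ha 0)
  calc ‖a (-l) * a l‖ ≤ C / br l * (C / br l) := by
        rw [norm_mul, ← br_neg l]
        exact mul_le_mul (ha _) (by simpa [br_neg] using ha l) (norm_nonneg _)
          (div_nonneg hC (br_pos _).le)
    _ = C ^ 2 * (br l ^ 2)⁻¹ := by ring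

theorem norm_tsum_div_sq_sub_sq_le {C : ℝ} {a : ℤ → ℂ} (ha : ∀ m, ‖a m‖ ≤ C / br m) (k : ℤ) :
    ‖∑' j : ℤ, a (k - j) * a (j - k) / ((k ^ 2 - j ^ 2 : ℤ) : ℂ)‖ ≤
      6 * (∑' m : ℤ, (br m ^ 2)⁻¹) * C ^ 2 / br k ^ 2 := by
  set W := ∑' m : ℤ, (br m ^ 2)⁻¹
  set G : ℤ → ℂ := fun l => a (-l) * a l / ((k ^ 2 - (k + l) ^ 2 : ℤ) : ℂ)
  set b : ℤ → ℝ := fun l => C ^ 2 * (4 / br k ^ 2 *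
    ((br l ^ 2)⁻¹ + (br (l - 2 * k) ^ 2)⁻¹ + (br (l + 2 * k) ^ 2)⁻¹))
  have hshift : ∑' j : ℤ, a (k - j) * a (j - k) / ((k ^ 2 - j ^ 2 : ℤ) : ℂ) = ∑' l, G l := by
    rw [← (Equiv.addLeft k).tsum_eq]
    simp [G]
  have hG : Summable G := (summable_inv_br_sq.mul_left (C ^ 2)).of_norm_bounded fun l =>
    (norm_div_intCast_le _ _).trans (norm_neg_mul_le ha l)
  have hpair : ∀ l, G l + G (-l) = a (-l) * a l * (pairKernel k l : ℂ) := by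
    intro l
    simp only [G, pairKernel, neg_neg]
    push_cast
    ring
  have hbound : ∀ l, ‖G l + G (-l)‖ ≤ b l := by
    intro l
    rw [hpair, norm_mul, Complex.norm_real, Real.norm_eq_abs]
    calc _ ≤ C ^ 2 * (br l ^ 2)⁻¹ * |pairKernel k l| := by
          gcongr; exact norm_neg_mul_le ha l
      _ = C ^ 2 * (|pairKernel k l| / br l ^ 2) := by ring
      _ ≤ b l := mul_le_mul_of_nonneg_left (abs_pairKernel_div_br_sq_le k l) (sq_nonneg C)
  have hW := summable_inv_br_sq.hasSum
  have hb : HasSum b (C ^ 2 * (4 / br k ^ 2 * (W + W + W))) :=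
    (((hW.add ((Equiv.subRight (2 * k)).hasSum_iff.mpr hW)).add
      ((Equiv.addRight (2 * k)).hasSum_iff.mpr hW)).mul_left _).mul_left _
  have h2 := two_mul_norm_tsum_le hG hb.summable hbound
  rw [hb.tsum_eq] at h2
  rw [hshift]
  calc ‖∑' l, G l‖ ≤ C ^ 2 * (4 / br k ^ 2 * (W + W + W)) / 2 := by linarith
    _ = 6 * W * C ^ 2 / br k ^ 2 := by ring

lemma ite_div_sq_sub_sq_eq (k j : ℤ) (z : ℂ) :
    (if j ≠ k ∧ j ≠ -k then z / ((k ^ 2 - j ^ 2 : ℤ) : ℂ) else 0) =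
      z / ((k ^ 2 - j ^ 2 : ℤ) : ℂ) := by
  refine ite_eq_left_iff.mpr fun hj => ?_
  obtain rfl | rfl : j = k ∨ j = -k := by tauto
  all_goals simp

theorem A1_bound :
    ∃ c₀ : ℝ, 0 < c₀ ∧
      ∀ (h cv α β t₀ : ℝ), 0 < h → 0 < cv → 1 < α → 0 ≤ β → 0 < t₀ →
      ∀ v : ℤ → ℝ → ℂ, (∀ m, Continuous (v m)) → (∀ t, v 0 t = 0) →
        (∀ m t, ‖v m t‖ ≤ cv * Real.exp (-β * |(m : ℝ)|) / br m ^ α) →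
      ∀ (k₀ : ℤ) (t : ℝ), |t| ≤ t₀ →
        ‖∫ τ in (0 : ℝ)..t,
            ∑' j : ℤ, if j ≠ k₀ ∧ j ≠ -k₀ then
                v (k₀ - j) τ * v (j - k₀) τ / ((k₀ ^ 2 - j ^ 2 : ℤ) : ℂ)
              else 0‖
          ≤ |t| * cv ^ 2 * c₀ / br k₀ ^ 2 := by
  have hW : 1 ≤ ∑' m : ℤ, (br m ^ 2)⁻¹ := by
    simpa [br] using summable_inv_br_sq.le_tsum 0 fun m _ => by have := br_pos m; positivity
  refine ⟨6 * ∑' m : ℤ, (br m ^ 2)⁻¹, by positivity, ?_⟩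
  intro _ cv α β _ _ hcv hα hβ _ v _ _ hv k₀ t _
  simp_rw [ite_div_sq_sub_sq_eq]
  have hbound (τ : ℝ) := norm_tsum_div_sq_sub_sq_le
    (fun m => (hv m τ).trans (mul_exp_div_br_rpow_le hcv.le hα.le hβ m)) k₀
  calc _ ≤ 6 * (∑' m : ℤ, (br m ^ 2)⁻¹) * cv ^ 2 / br k₀ ^ 2 * |t - 0| :=
        intervalIntegral.norm_integral_le_of_norm_le_const fun τ _ => hbound τ
    _ = _ := by rw [sub_zero]; ring
end
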